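/- arXiv:1212.0757 — 5 statements merged into one kernel-verified Lean document; each statement's English description precedes it below -/
import Mathlib

section
/- Let φ : [0,1] → [0,∞) be a nondecreasing function with φ(h) > 0 for h > 0, and suppose there exists θ ∈ (0,1) such that for all h ∈ (0,1], (1/h)·∫₀ʰ φ(t) dt ≥ θ·h·φ(h)·(1/h), i.e. ∫₀ʰ φ(t) dt ≥ θ·h·φ(h). Then, setting F(h) = ∫₀ʰ φ(t) dt, one has F(h)/F(1) ≥ h^{1/θ} for all h ∈ (0,1]. -/
/-!
Since `φ` is nondecreasing, the slope of `F` on `[x, z]` is at most `φ z ≤ F z / (θ z)`, so `F`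
is a subsolution of `y' = y / (θ x)`. Comparing it on `[h, 1]` with the solutions
`F h * (x / h) ^ c` of `y' = c y / x` for `c > 1 / θ` gives `F 1 ≤ F h * h ^ (-c)`; then let `c`
decrease to `1 / θ`.
-/

open MeasureTheory intervalIntegral Set Filter Topology

theorem slope_integral_le_of_monotoneOn {φ : ℝ → ℝ} {a b x z : ℝ}
    (hφ : MonotoneOn φ (Icc a b)) (hint : IntervalIntegrable φ volume a b)
    (hx : a ≤ x) (hxz : x < z) (hz : z ≤ b) :
    slope (fun y => ∫ t in a..y, φ t) x z ≤ φ z := by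
  have hsub : ∀ u ∈ Icc a b, ∀ v ∈ Icc a b, IntervalIntegrable φ volume u v :=
    fun u hu v hv => hint.mono_set (uIcc_subset_uIcc (Icc_subset_uIcc hu) (Icc_subset_uIcc hv))
  have hxb : x ∈ Icc a b := ⟨hx, hxz.le.trans hz⟩
  have hzb : z ∈ Icc a b := ⟨hx.trans hxz.le, hz⟩
  have hbound : ∫ t in x..z, φ t ≤ ∫ _ in x..z, φ z :=
    integral_mono_on hxz.le (hsub x hxb z hzb) intervalIntegrable_const fun t ht =>
      hφ ⟨hx.trans ht.1, ht.2.trans hz⟩ hzb ht.2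
  rw [intervalIntegral.integral_const, smul_eq_mul] at hbound
  rw [slope_def_field, integral_interval_sub_left (hsub a (left_mem_Icc.2 (hx.trans hxb.2)) z hzb)
    (hsub a (left_mem_Icc.2 (hx.trans hxb.2)) x hxb), div_le_iff₀ (sub_pos.2 hxz), mul_comm]
  exact hbound

theorem le_mul_div_rpow_of_slope_le_of_lt {G : ℝ → ℝ} {a b p c : ℝ} (ha : 0 < a)
    (hGa : 0 < G a) (hpc : p < c) (hG : ContinuousOn G (Icc a b))
    (hslope : ∀ x ∈ Ico a b, ∀ z ∈ Ioc x b, slope G x z ≤ p * G z / z) :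
    ∀ x ∈ Icc a b, G x ≤ G a * (x / a) ^ c := by
  refine image_le_of_liminf_slope_right_lt_deriv_boundary' (f' := fun x => p * G x / x)
    (B' := fun x => G a * (c * (x / a) ^ (c - 1) * (1 / a))) hG ?_ (by simp [ha.ne']) ?_ ?_ ?_
  · intro x hx r hr
    have hx0 : 0 < x := ha.trans_le hx.1
    have hright : Ioc x b ∈ 𝓝[>] x := Ioc_mem_nhdsGT hx.2
    have hcont : ContinuousWithinAt (fun z => p * G z / z) (Icc a b) x :=
      ((hG x (Ico_subset_Icc_self hx)).const_mul p).div continuousWithinAt_id hx0.ne'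
    have hlt : ∀ᶠ z in 𝓝[>] x, p * G z / z < r :=
      (hcont.tendsto.mono_left (nhdsWithin_le_of_mem (mem_of_superset hright
        fun z hz => ⟨hx.1.trans hz.1.le, hz.2⟩))).eventually_lt_const hr
    refine (hlt.and hright).mono (fun z ⟨hzr, hz⟩ => ?_) |>.frequently
    exact (hslope x hx z hz).trans_lt hzr
  · refine continuousOn_const.mul ((continuousOn_id.div_const a).rpow_const fun x hx => ?_)
    exact Or.inl (div_pos (ha.trans_le hx.1) ha).ne'
  · intro x hx
    have hx0 : 0 < x := ha.trans_le hx.1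
    have := ((Real.hasDerivAt_rpow_const (p := c) (Or.inl (div_pos hx0 ha).ne')).comp x
      ((hasDerivAt_id x).div_const a)).const_mul (G a)
    exact this.hasDerivWithinAt.congr_deriv (by simp [div_eq_mul_inv])
  · intro x hx hGx
    have hx0 : 0 < x := ha.trans_le hx.1
    have hB : 0 < G a * (x / a) ^ c := mul_pos hGa (Real.rpow_pos_of_pos (div_pos hx0 ha) c)
    have hderiv : G a * (c * (x / a) ^ (c - 1) * (1 / a)) = c * (G a * (x / a) ^ c) / x := by
      rw [Real.rpow_sub_one (div_pos hx0 ha).ne']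
      field_simp
    simp only [hGx, hderiv]
    gcongr

theorem le_mul_div_rpow_of_slope_le {G : ℝ → ℝ} {a b p : ℝ} (ha : 0 < a) (hGa : 0 < G a)
    (hG : ContinuousOn G (Icc a b))
    (hslope : ∀ x ∈ Ico a b, ∀ z ∈ Ioc x b, slope G x z ≤ p * G z / z) :
    ∀ x ∈ Icc a b, G x ≤ G a * (x / a) ^ p := by
  intro x hx
  have hlim : Tendsto (fun c => G a * (x / a) ^ c) (𝓝[>] p) (𝓝 (G a * (x / a) ^ p)) :=
    ((Real.continuousAt_const_rpow (div_pos (ha.trans_le hx.1) ha).ne').const_mul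
      (G a)).continuousWithinAt.tendsto
  exact ge_of_tendsto hlim <| eventually_nhdsWithin_of_forall fun c hc =>
    le_mul_div_rpow_of_slope_le_of_lt ha hGa hc hG hslope x hx

theorem stmt0_general (φ : ℝ → ℝ) (hmono : MonotoneOn φ (Set.Icc 0 1))
    (hint : IntervalIntegrable φ volume 0 1)
    (hpos : ∀ h ∈ Set.Ioc (0:ℝ) 1, 0 < φ h)
    (θ : ℝ) (hθ0 : 0 < θ)
    (hH : ∀ h ∈ Set.Ioc (0:ℝ) 1, θ * h * φ h ≤ ∫ t in (0:ℝ)..h, φ t) :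
    ∀ h ∈ Set.Ioc (0:ℝ) 1,
      h ^ (1/θ) ≤ (∫ t in (0:ℝ)..h, φ t) / (∫ t in (0:ℝ)..1, φ t) := by
  set F : ℝ → ℝ := fun x => ∫ t in (0:ℝ)..x, φ t
  have hFpos : ∀ x ∈ Ioc (0:ℝ) 1, 0 < F x := fun x hx =>
    (mul_pos (mul_pos hθ0 hx.1) (hpos x hx)).trans_le (hH x hx)
  have hFcont : ContinuousOn F (Icc 0 1) := by
    simpa [uIcc_of_le zero_le_one] using
      continuousOn_primitive_interval' hint (left_mem_uIcc (a := (0:ℝ)) (b := 1))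
  have hslope : ∀ x ∈ Ioc (0:ℝ) 1, ∀ z ∈ Ioc x 1, slope F x z ≤ 1 / θ * F z / z := by
    intro x hx z hz
    have hz0 : 0 < z := hx.1.trans hz.1
    calc slope F x z ≤ φ z := slope_integral_le_of_monotoneOn hmono hint hx.1.le hz.1 hz.2
      _ ≤ 1 / θ * F z / z := by
        rw [le_div_iff₀ hz0, one_div_mul_eq_div, le_div_iff₀ hθ0]
        linarith [hH z ⟨hz0, hz.2⟩]
  intro h hh
  have hcomp := le_mul_div_rpow_of_slope_le hh.1 (hFpos h hh)
    (hFcont.mono (Icc_subset_Icc hh.1.le le_rfl))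
    (fun x hx => hslope x ⟨hh.1.trans_le hx.1, hx.2.le⟩) 1 (right_mem_Icc.2 hh.2)
  have hp : 0 < h ^ (1 / θ) := Real.rpow_pos_of_pos hh.1 _
  rw [Real.div_rpow zero_le_one hh.1.le, Real.one_rpow, mul_one_div, le_div_iff₀ hp] at hcomp
  show h ^ (1 / θ) ≤ F h / F 1
  rw [le_div_iff₀ (hFpos 1 (right_mem_Ioc.2 zero_lt_one)), mul_comm]
  exact hcomp

theorem stmt0 (φ : ℝ → ℝ) (hmono : MonotoneOn φ (Set.Icc 0 1))
    (hnonneg : ∀ t ∈ Set.Icc (0:ℝ) 1, 0 ≤ φ t)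
    (hint : IntervalIntegrable φ volume 0 1)
    (hpos : ∀ h ∈ Set.Ioc (0:ℝ) 1, 0 < φ h)
    (θ : ℝ) (hθ0 : 0 < θ) (hθ1 : θ < 1)
    (hH : ∀ h ∈ Set.Ioc (0:ℝ) 1, θ * h * φ h ≤ ∫ t in (0:ℝ)..h, φ t) :
    ∀ h ∈ Set.Ioc (0:ℝ) 1,
      h ^ (1/θ) ≤ (∫ t in (0:ℝ)..h, φ t) / (∫ t in (0:ℝ)..1, φ t) :=
  stmt0_general φ hmono hint hpos θ hθ0 hH
end

section
/- Let φ : [0,1] → [0,∞) be nondecreasing with F(h) := ∫₀ʰ φ(t) dt, and suppose θ ∈ (0,1) satisfies F(h) ≥ θ·h·φ(h) for all h ∈ (0,1]. Then for all h ∈ (0,1], φ(h) ≥ h^{1/θ − 1}·F(1). -/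
/-!
Since `φ` is monotone, the slope of `F` on `[x, z]` is at most `φ z ≤ F z / (θ z)`. Hence the
right Dini derivative of `F(x) x^{-1/θ}` is nonpositive, so this function is nonincreasing on
`(0, 1]`, and `F 1 ≤ F h · h^{-1/θ} ≤ h φ(h) h^{-1/θ}`.
-/

open MeasureTheory intervalIntegral Set Filter Topology

theorem MonotoneOn.intervalIntegral_le_sub_mul {φ : ℝ → ℝ} {x z : ℝ} (hxz : x ≤ z)
    (hφ : MonotoneOn φ (Icc x z)) (hint : IntervalIntegrable φ volume x z) :
    ∫ t in x..z, φ t ≤ (z - x) * φ z := by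
  simpa [mul_comm] using integral_mono_on hxz hint intervalIntegrable_const
    fun t ht ↦ hφ ht (right_mem_Icc.2 hxz) ht.2

theorem MonotoneOn.slope_primitive_le {φ : ℝ → ℝ} {a x z : ℝ} (hax : a ≤ x) (hxz : x < z)
    (hφ : MonotoneOn φ (Icc x z)) (hint : IntervalIntegrable φ volume a z) :
    slope (fun y ↦ ∫ t in a..y, φ t) x z ≤ φ z := by
  have hx : x ∈ uIcc a z := by rw [uIcc_of_le (hax.trans hxz.le)]; exact ⟨hax, hxz.le⟩
  rw [slope_def_field, div_le_iff₀ (sub_pos.2 hxz),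
    integral_interval_sub_left hint (hint.mono_set (uIcc_subset_uIcc_left hx)), mul_comm]
  exact hφ.intervalIntegral_le_sub_mul hxz.le (hint.mono_set (uIcc_subset_uIcc_right hx))

theorem le_of_forall_eventually_slope_right_lt {f : ℝ → ℝ} {a b : ℝ} (hab : a ≤ b)
    (hf : ContinuousOn f (Icc a b))
    (hslope : ∀ x ∈ Ico a b, ∀ r > 0, ∀ᶠ z in 𝓝[>] x, slope f x z < r) :
    f b ≤ f a :=
  image_le_of_liminf_slope_right_le_deriv_boundary (B := fun _ ↦ f a) (B' := fun _ ↦ 0) hf le_rfl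
    continuousOn_const (fun x _ ↦ hasDerivWithinAt_const x _ _)
    (fun x hx r hr ↦ (hslope x hx r hr).frequently) (right_mem_Icc.2 hab)

theorem mul_rpow_neg_le_of_slope_le {F : ℝ → ℝ} {a b c : ℝ} (ha : 0 < a) (hab : a ≤ b)
    (hF : ContinuousOn F (Icc a b))
    (hslope : ∀ x ∈ Ico a b, ∀ z ∈ Ioc x b, slope F x z ≤ c * F z / z) :
    F b * b ^ (-c) ≤ F a * a ^ (-c) := by
  set p : ℝ → ℝ := fun x ↦ x ^ (-c)
  have hp : ContinuousOn p (Icc a b) := fun x hx ↦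
    (Real.continuousAt_rpow_const x _ (Or.inl (ha.trans_le hx.1).ne')).continuousWithinAt
  refine le_of_forall_eventually_slope_right_lt (f := fun y ↦ F y * p y) hab (hF.mul hp)
    fun x hx r hr ↦ ?_
  have hx0 : 0 < x := ha.trans_le hx.1
  have hFx : Tendsto F (𝓝[>] x) (𝓝 (F x)) :=
    ((hF x (Ico_subset_Icc_self hx)).mono_of_mem_nhdsWithin
      (Icc_mem_nhdsGT_of_mem hx)).tendsto
  have hpx : Tendsto (slope p x) (𝓝[>] x) (𝓝 (-c * x ^ (-c - 1))) :=
    (hasDerivAt_iff_tendsto_slope_left_right.1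
      (Real.hasDerivAt_rpow_const (Or.inl hx0.ne'))).2
  have hbound : Tendsto (fun z ↦ F z * slope p x z + p x * (c * F z / z)) (𝓝[>] x) (𝓝 0) := by
    have hlim := (hFx.mul hpx).add (((tendsto_const_nhds (x := c)).mul hFx).div
      (tendsto_id.mono_left nhdsWithin_le_nhds) hx0.ne' |>.const_mul (p x))
    have hzero : F x * (-c * x ^ (-c - 1)) + p x * (c * F x / x) = 0 := by
      rw [Real.rpow_sub_one hx0.ne']
      field_simp
      ring
    rw [hzero] at hlim
    exact hlim
  have hslopeG : ∀ᶠ z in 𝓝[>] x,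
      slope (fun y ↦ F y * p y) x z ≤ F z * slope p x z + p x * (c * F z / z) := by
    filter_upwards [Ioc_mem_nhdsGT_of_mem ⟨le_rfl, hx.2⟩] with z hz
    have hprod : slope (fun y ↦ F y * p y) x z = F z * slope p x z + p x * slope F x z := by
      simp only [slope_def_field]
      field_simp [sub_ne_zero.2 hz.1.ne']
      ring
    rw [hprod]
    gcongr
    exact hslope x hx z hz
  filter_upwards [hslopeG, hbound.eventually_lt_const hr] with z h₁ h₂
  exact h₁.trans_lt h₂

theorem stmt1_general (φ : ℝ → ℝ) (hmono : MonotoneOn φ (Set.Icc 0 1))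
    (hint : IntervalIntegrable φ volume 0 1)
    (θ : ℝ) (hθ0 : 0 < θ)
    (hH : ∀ h ∈ Set.Ioc (0:ℝ) 1, θ * h * φ h ≤ ∫ t in (0:ℝ)..h, φ t) :
    ∀ h ∈ Set.Ioc (0:ℝ) 1,
      h ^ (1/θ - 1) * (∫ t in (0:ℝ)..1, φ t) ≤ φ h := by
  rintro h ⟨h0, h1⟩
  set F : ℝ → ℝ := fun x ↦ ∫ t in (0:ℝ)..x, φ t
  have hint' : ∀ z ∈ Icc (0:ℝ) 1, IntervalIntegrable φ volume 0 z := fun z hz ↦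
    hint.mono_set (uIcc_subset_uIcc_left (by rwa [uIcc_of_le zero_le_one]))
  have hF : ContinuousOn F (Icc h 1) := by
    refine (continuousOn_primitive_interval' hint left_mem_uIcc).mono ?_
    rw [uIcc_of_le zero_le_one]
    exact Icc_subset_Icc h0.le le_rfl
  have hslope : ∀ x ∈ Ico h 1, ∀ z ∈ Ioc x 1, slope F x z ≤ 1 / θ * F z / z := by
    intro x hx z hz
    have hz0 : 0 < z := h0.trans_le (hx.1.trans hz.1.le)
    calc slope F x z ≤ φ z :=
          (hmono.mono (Icc_subset_Icc (h0.le.trans hx.1) hz.2)).slope_primitive_le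
            (h0.le.trans hx.1) hz.1 (hint' z ⟨hz0.le, hz.2⟩)
      _ ≤ 1 / θ * F z / z := by
          rw [le_div_iff₀ hz0, one_div_mul_eq_div, le_div_iff₀ hθ0]
          linarith [hH z ⟨hz0, hz.2⟩]
  have hFh : F h ≤ h * φ h := by
    simpa using (hmono.mono (Icc_subset_Icc le_rfl h1)).intervalIntegral_le_sub_mul h0.le
      (hint' h ⟨h0.le, h1⟩)
  have hG := mul_rpow_neg_le_of_slope_le h0 h1 hF hslope
  rw [Real.one_rpow, mul_one] at hG
  have hF1 : F 1 ≤ h * φ h * h ^ (-(1/θ)) := hG.trans (by gcongr)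
  calc h ^ (1/θ - 1) * F 1 ≤ h ^ (1/θ - 1) * (h * φ h * h ^ (-(1/θ))) := by gcongr
    _ = φ h := by
      rw [Real.rpow_sub h0, Real.rpow_neg h0.le, Real.rpow_one]
      field_simp

theorem stmt1 (φ : ℝ → ℝ) (hmono : MonotoneOn φ (Set.Icc 0 1))
    (hnonneg : ∀ t ∈ Set.Icc (0:ℝ) 1, 0 ≤ φ t)
    (hint : IntervalIntegrable φ volume 0 1)
    (θ : ℝ) (hθ0 : 0 < θ) (hθ1 : θ < 1)
    (hH : ∀ h ∈ Set.Ioc (0:ℝ) 1, θ * h * φ h ≤ ∫ t in (0:ℝ)..h, φ t) :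
    ∀ h ∈ Set.Ioc (0:ℝ) 1,
      h ^ (1/θ - 1) * (∫ t in (0:ℝ)..1, φ t) ≤ φ h :=
  stmt1_general φ hmono hint θ hθ0 hH
end

section
/- Let g₁, …, g_k : ℝ → ℝ be absolutely continuous integrable functions, each vanishing on (−∞, 0]. Then the k-fold convolution g₁ * g₂ * ⋯ * g_k is of class C^{k−1} on ℝ, its (k−1)-th derivative is absolutely continuous, and the convolution together with its derivatives of order ≤ k−1 all vanish at 0. -/
/-!
Write `f = ∫ f'` for an absolutely continuous factor `f`. If `G` vanishes on `(-∞, 0]`, is `C^n`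
and has an absolutely continuous `n`-th derivative, Fubini gives `(f ⋆ G)' = f' ⋆ G` and
`(f' ⋆ G^(j))' = f' ⋆ G^(j + 1)`. Since both factors vanish on `(-∞, 0]`, the convolution integral
at `x` only runs over `[0, x]`, so `f' ⋆ G^(j)` is continuous for continuous `G^(j)` and locally
integrable for locally integrable `G^(j)`. Hence `f ⋆ G` is `C^(n + 1)`, its top derivative
`f' ⋆ G^(n)` is again absolutely continuous, and all its derivatives vanish on `(-∞, 0]`.
Induction over the factors gives the theorem.
-/

open MeasureTheory

/-- Convolution of two real functions. -/
noncomputable def convFn (f g : ℝ → ℝ) : ℝ → ℝ := fun x => ∫ t, f t * g (x - t)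

/-- Iterated convolution of a nonempty list of functions. -/
noncomputable def multiConv : List (ℝ → ℝ) → (ℝ → ℝ)
  | [] => fun _ => 0
  | [f] => f
  | f :: rest => convFn f (multiConv rest)

/-- A function is absolutely continuous if it is an indefinite integral of a
locally integrable function. -/
def AbsCont (h : ℝ → ℝ) : Prop :=
  ∃ h' : ℝ → ℝ, LocallyIntegrable h' volume ∧
    ∀ a b : ℝ, h b - h a = ∫ t in a..b, h' t

open Set

theorem MeasureTheory.LocallyIntegrable.intervalIntegrable {φ : ℝ → ℝ} (hφ : LocallyIntegrable φ volume) (a b : ℝ) :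
    IntervalIntegrable φ volume a b :=
  (intervalIntegrable_iff' (h := enorm_ne_top)).mpr (hφ.integrableOn_isCompact isCompact_uIcc)

def Causal (f : ℝ → ℝ) : Prop := ∀ x ≤ 0, f x = 0

namespace AbsCont

theorem continuous {h : ℝ → ℝ} (hh : AbsCont h) : Continuous h := by
  obtain ⟨u, hu, hid⟩ := hh
  have hprim : h = fun b => h 0 + ∫ t in (0:ℝ)..b, u t := funext fun b => by
    linarith [hid 0 b]
  rw [hprim]
  exact continuous_const.add (intervalIntegral.continuous_primitive hu.intervalIntegrable 0)

theorem exists_causal_deriv {h : ℝ → ℝ} (hh : AbsCont h) (h0 : Causal h) :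
    ∃ u : ℝ → ℝ, LocallyIntegrable u volume ∧ Causal u ∧
      ∀ a b : ℝ, h b - h a = ∫ t in a..b, u t := by
  obtain ⟨u, hu, hid⟩ := hh
  have hu' : LocallyIntegrable ((Ioi 0).indicator u) volume := hu.indicator measurableSet_Ioi
  have hprim : ∀ x, h x = ∫ t in (0:ℝ)..x, (Ioi 0).indicator u t := by
    intro x
    rcases le_total x 0 with hx | hx
    · rw [h0 x hx, intervalIntegral.integral_congr (g := fun _ => 0),
        intervalIntegral.integral_zero]
      intro t ht
      rw [uIcc_of_ge hx] at ht
      exact indicator_of_notMem (not_lt.mpr ht.2) u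
    · have hx' := hid 0 x
      rw [h0 0 le_rfl, sub_zero] at hx'
      rw [hx']
      refine intervalIntegral.integral_congr_ae (ae_of_all _ fun t ht => ?_)
      rw [uIoc_of_le hx] at ht
      exact (indicator_of_mem ht.1 u).symm
  refine ⟨_, hu', fun t ht => indicator_of_notMem (not_lt.mpr ht) u, fun a b => ?_⟩
  rw [hprim, hprim, intervalIntegral.integral_interval_sub_left (hu'.intervalIntegrable _ _)
    (hu'.intervalIntegrable _ _)]

end AbsCont

theorem hasDerivAt_of_sub_eq_integral {F D : ℝ → ℝ} (hD : Continuous D)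
    (hFD : ∀ a b, F b - F a = ∫ x in a..b, D x) (x : ℝ) : HasDerivAt F (D x) x := by
  have hprim : F = fun y => F 0 + ∫ t in (0:ℝ)..y, D t := funext fun y => by
    linarith [hFD 0 y]
  rw [hprim]
  simpa using (intervalIntegral.integral_hasDerivAt_right (hD.intervalIntegrable 0 x)
    (hD.stronglyMeasurableAtFilter volume _) hD.continuousAt).const_add (F 0)

section Convolution

variable {φ ψ V v : ℝ → ℝ}

theorem convFn_comm (φ ψ : ℝ → ℝ) : convFn φ ψ = convFn ψ φ := by
  funext x
  rw [convFn, ← integral_sub_left_eq_self _ volume x]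
  simp only [sub_sub_cancel, mul_comm, convFn]

theorem convFn_eq_convolution (φ ψ : ℝ → ℝ) :
    convFn φ ψ = convolution φ ψ (ContinuousLinearMap.mul ℝ ℝ) volume := by
  funext x
  simp only [convFn, convolution_def, ContinuousLinearMap.mul_apply']

theorem MeasureTheory.Integrable.convFn (hφ : Integrable φ volume) (hψ : Integrable ψ volume) :
    Integrable (convFn φ ψ) volume := by
  rw [convFn_eq_convolution]
  exact hφ.integrable_convolution _ hψ

theorem Causal.convFn (hφ0 : Causal φ) (hψ0 : Causal ψ) : Causal (convFn φ ψ) := by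
  intro x hx
  have hzero : (fun t => φ t * ψ (x - t)) = fun _ => 0 := funext fun t => by
    rcases le_or_gt t 0 with ht | ht
    · rw [hφ0 t ht, zero_mul]
    · rw [hψ0 (x - t) (by linarith), mul_zero]
  simp only [_root_.convFn, hzero, integral_zero]

theorem norm_mul_comp_sub_le_indicator (hφ0 : Causal φ) (hψ0 : Causal ψ) {c R M x : ℝ}
    (hM : ∀ y ∈ Icc (c - R) R, ‖ψ y‖ ≤ M) (hx : x ∈ Icc c R) (t : ℝ) :
    ‖φ t * ψ (x - t)‖ ≤ (Icc 0 R).indicator (fun t => M * ‖φ t‖) t := by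
  by_cases ht : t ∈ Icc 0 R
  · rw [indicator_of_mem ht, norm_mul, mul_comm]
    exact mul_le_mul_of_nonneg_right
      (hM _ ⟨by linarith [hx.1, ht.2], by linarith [hx.2, ht.1]⟩) (norm_nonneg _)
  · rw [indicator_of_notMem ht]
    rcases lt_or_ge t 0 with ht0 | ht0
    · simp [hφ0 t ht0.le]
    · have hRt : R < t := lt_of_not_ge fun h => ht ⟨ht0, h⟩
      simp [hψ0 (x - t) (by linarith [hx.2])]

theorem integrable_indicator_Icc_mul_norm (hφ : LocallyIntegrable φ volume) (R M : ℝ) :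
    Integrable ((Icc 0 R).indicator fun t => M * ‖φ t‖) volume :=
  (integrable_indicator_iff measurableSet_Icc).mpr
    ((hφ.integrableOn_isCompact isCompact_Icc).norm.const_mul M)

theorem aestronglyMeasurable_mul_comp_sub (hφ : LocallyIntegrable φ volume)
    (hψ : Continuous ψ) (x : ℝ) : AEStronglyMeasurable (fun t => φ t * ψ (x - t)) volume :=
  hφ.aestronglyMeasurable.mul (hψ.comp (continuous_const.sub continuous_id)).aestronglyMeasurable

theorem integrable_mul_comp_sub (hφ : LocallyIntegrable φ volume) (hφ0 : Causal φ)
    (hψ : Continuous ψ) (hψ0 : Causal ψ) (x : ℝ) :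
    Integrable (fun t => φ t * ψ (x - t)) volume := by
  obtain ⟨M, hM⟩ := (isCompact_Icc (a := x - x) (b := x)).exists_bound_of_continuousOn
    hψ.continuousOn
  exact (integrable_indicator_Icc_mul_norm hφ x M).mono'
    (aestronglyMeasurable_mul_comp_sub hφ hψ x)
    (ae_of_all _ (norm_mul_comp_sub_le_indicator hφ0 hψ0 hM ⟨le_rfl, le_rfl⟩))

theorem continuous_convFn (hφ : LocallyIntegrable φ volume) (hφ0 : Causal φ)
    (hψ : Continuous ψ) (hψ0 : Causal ψ) : Continuous (convFn φ ψ) := by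
  refine continuous_iff_continuousAt.mpr fun x₀ => ?_
  obtain ⟨M, hM⟩ := (isCompact_Icc (a := x₀ - 1 - (x₀ + 1)) (b := x₀ + 1))
    |>.exists_bound_of_continuousOn hψ.continuousOn
  refine continuousAt_of_dominated
    (Filter.Eventually.of_forall (aestronglyMeasurable_mul_comp_sub hφ hψ)) ?_
    (integrable_indicator_Icc_mul_norm hφ (x₀ + 1) M)
    (ae_of_all _ fun t =>
      continuousAt_const.mul (hψ.comp (continuous_id.sub continuous_const)).continuousAt)
  filter_upwards [Icc_mem_nhds (sub_one_lt x₀) (lt_add_one x₀)] with x hx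
  exact ae_of_all _ (norm_mul_comp_sub_le_indicator hφ0 hψ0 hM hx)

/-- Truncating `φ` to `[0, b]` and `v` to `[a - b, b]` does not change the integrand over
`x ∈ (a, b]`, and makes it a product of integrable functions. -/
theorem integrable_prod_mul_comp_sub (hφ : LocallyIntegrable φ volume) (hφ0 : Causal φ)
    (hv : LocallyIntegrable v volume) (hv0 : Causal v) (a b : ℝ) :
    Integrable (fun p : ℝ × ℝ => φ p.2 * v (p.1 - p.2))
      ((volume.restrict (Ioc a b)).prod volume) := by
  have htrunc := Integrable.convolution_integrand (ContinuousLinearMap.mul ℝ ℝ)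
    (μ := volume) (ν := volume)
    ((integrable_indicator_iff measurableSet_Icc).mpr
      (hφ.integrableOn_isCompact (isCompact_Icc (a := 0) (b := b))))
    ((integrable_indicator_iff measurableSet_Icc).mpr
      (hv.integrableOn_isCompact (isCompact_Icc (a := a - b) (b := b))))
  have hμ : (volume.restrict (Ioc a b)).prod (volume : Measure ℝ)
      = ((volume : Measure ℝ).prod volume).restrict (Ioc a b ×ˢ univ) := by
    rw [← Measure.prod_restrict, Measure.restrict_univ]
  rw [hμ]
  refine htrunc.restrict.congr ((ae_restrict_iff' (measurableSet_Ioc.prod MeasurableSet.univ)).mpr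
    (ae_of_all _ fun p hp => ?_))
  obtain ⟨x, t⟩ := p
  have hx : x ∈ Ioc a b := hp.1
  simp only [ContinuousLinearMap.mul_apply']
  by_cases ht : t ∈ Icc 0 b
  · have hxt : x - t ∈ Icc (a - b) b := ⟨by linarith [hx.1, ht.2], by linarith [hx.2, ht.1]⟩
    rw [indicator_of_mem ht, indicator_of_mem hxt]
  · rw [indicator_of_notMem ht, zero_mul]
    rcases lt_or_ge t 0 with ht0 | ht0
    · rw [hφ0 t ht0.le, zero_mul]
    · have hbt : b < t := lt_of_not_ge fun h => ht ⟨ht0, h⟩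
      rw [hv0 (x - t) (by linarith [hx.2]), mul_zero]

theorem locallyIntegrable_convFn (hφ : LocallyIntegrable φ volume) (hφ0 : Causal φ)
    (hv : LocallyIntegrable v volume) (hv0 : Causal v) :
    LocallyIntegrable (convFn φ v) volume := by
  refine locallyIntegrable_iff.mpr fun K hK => ?_
  have hIoc : IntegrableOn (convFn φ v) (Ioc (sInf K - 1) (sSup K)) volume :=
    (integrable_prod_mul_comp_sub hφ hφ0 hv hv0 _ _).integral_prod_left
  refine hIoc.mono_set fun x hx => ?_
  have hxK := hK.isBounded.subset_Icc_sInf_sSup hx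
  exact ⟨by linarith [hxK.1], hxK.2⟩

/-- Fubini on `(a, b] × ℝ`. -/
theorem convFn_sub_eq_integral (hφ : LocallyIntegrable φ volume) (hφ0 : Causal φ)
    (hV : Continuous V) (hV0 : Causal V) (hv : LocallyIntegrable v volume) (hv0 : Causal v)
    (hVv : ∀ a b, V b - V a = ∫ x in a..b, v x) (a b : ℝ) :
    convFn φ V b - convFn φ V a = ∫ x in a..b, convFn φ v x := by
  wlog hab : a ≤ b generalizing a b
  · rw [intervalIntegral.integral_symm, ← this b a (le_of_not_ge hab), neg_sub]
  have hslice : ∀ t, φ t * V (b - t) - φ t * V (a - t) = ∫ x in Ioc a b, φ t * v (x - t) := by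
    intro t
    rw [← mul_sub, hVv, ← intervalIntegral.integral_comp_sub_right (fun x => v x) t,
      ← intervalIntegral.integral_const_mul, intervalIntegral.integral_of_le hab]
  calc convFn φ V b - convFn φ V a
      = ∫ t, (φ t * V (b - t) - φ t * V (a - t)) :=
        (integral_sub (integrable_mul_comp_sub hφ hφ0 hV hV0 b)
          (integrable_mul_comp_sub hφ hφ0 hV hV0 a)).symm
    _ = ∫ t, ∫ x in Ioc a b, φ t * v (x - t) := by simp_rw [hslice]
    _ = ∫ x in Ioc a b, ∫ t, φ t * v (x - t) :=
        integral_integral_swap (integrable_prod_mul_comp_sub hφ hφ0 hv hv0 a b).swap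
    _ = ∫ x in a..b, convFn φ v x := (intervalIntegral.integral_of_le hab).symm

theorem hasDerivAt_convFn (hφ : LocallyIntegrable φ volume) (hφ0 : Causal φ)
    (hV : Continuous V) (hV0 : Causal V) (hv : LocallyIntegrable v volume) (hv0 : Causal v)
    (hVv : ∀ a b, V b - V a = ∫ x in a..b, v x) (hφv : Continuous (convFn φ v)) (x : ℝ) :
    HasDerivAt (convFn φ V) (convFn φ v x) x :=
  hasDerivAt_of_sub_eq_integral hφv (convFn_sub_eq_integral hφ hφ0 hV hV0 hv hv0 hVv) x

end Convolution

section IteratedDeriv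

variable {𝕜 F : Type*} [NontriviallyNormedField 𝕜] [NormedAddCommGroup F] [NormedSpace 𝕜 F]
  {f : 𝕜 → F} {E : ℕ → 𝕜 → F} {n : ℕ}

theorem iteratedDeriv_succ_eq_of_hasDerivAt (h0 : ∀ x, HasDerivAt f (E 0 x) x)
    (hE : ∀ j < n, ∀ x, HasDerivAt (E j) (E (j + 1) x) x) :
    ∀ j ≤ n, iteratedDeriv (j + 1) f = E j := by
  intro j hj
  induction j with
  | zero => exact funext fun x => by rw [iteratedDeriv_one, (h0 x).deriv]
  | succ j ih =>
    rw [iteratedDeriv_succ, ih (by omega)]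
    exact funext fun x => (hE j (by omega) x).deriv

theorem contDiff_succ_of_hasDerivAt (h0 : ∀ x, HasDerivAt f (E 0 x) x)
    (hE : ∀ j < n, ∀ x, HasDerivAt (E j) (E (j + 1) x) x) (hcont : Continuous (E n)) :
    ContDiff 𝕜 (n + 1 : ℕ) f := by
  have hit := iteratedDeriv_succ_eq_of_hasDerivAt h0 hE
  have hdiff : ∀ j < n + 1, Differentiable 𝕜 (iteratedDeriv j f)
    | 0, _ => fun x => by rw [iteratedDeriv_zero]; exact (h0 x).differentiableAt
    | j + 1, hj => by rw [hit j (by omega)]; exact fun x => (hE j (by omega) x).differentiableAt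
  refine contDiff_nat_iff_iteratedDeriv.mpr ⟨fun j hj => ?_, hdiff⟩
  rcases Nat.lt_or_eq_of_le hj with hj | rfl
  · exact (hdiff j hj).continuous
  · rwa [hit n le_rfl]

end IteratedDeriv

structure CausalRegular (n : ℕ) (F : ℝ → ℝ) : Prop where
  integrable : Integrable F volume
  contDiff : ContDiff ℝ n F
  causal_iteratedDeriv : ∀ j ≤ n, Causal (iteratedDeriv j F)
  absCont_iteratedDeriv : AbsCont (iteratedDeriv n F)

namespace CausalRegular

theorem of_absCont {f : ℝ → ℝ} (hfi : Integrable f volume) (hfac : AbsCont f)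
    (hf0 : Causal f) : CausalRegular 0 f where
  integrable := hfi
  contDiff := contDiff_zero.mpr hfac.continuous
  causal_iteratedDeriv j hj := by rwa [Nat.le_zero.mp hj, iteratedDeriv_zero]
  absCont_iteratedDeriv := by rwa [iteratedDeriv_zero]

theorem causal {n : ℕ} {G : ℝ → ℝ} (hG : CausalRegular n G) : Causal G := by
  simpa using hG.causal_iteratedDeriv 0 (Nat.zero_le n)

theorem continuous_iteratedDeriv {n : ℕ} {G : ℝ → ℝ} (hG : CausalRegular n G) {j : ℕ}
    (hj : j ≤ n) : Continuous (iteratedDeriv j G) :=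
  hG.contDiff.continuous_iteratedDeriv j (by exact_mod_cast hj)

theorem sub_eq_integral_iteratedDeriv {n : ℕ} {G : ℝ → ℝ} (hG : CausalRegular n G) {j : ℕ}
    (hj : j < n) (a b : ℝ) :
    iteratedDeriv j G b - iteratedDeriv j G a = ∫ x in a..b, iteratedDeriv (j + 1) G x := by
  rw [iteratedDeriv_succ, intervalIntegral.integral_deriv_eq_sub]
  · exact fun x _ => hG.contDiff.differentiable_iteratedDeriv j (by exact_mod_cast hj) x
  · rw [← iteratedDeriv_succ]
    exact (hG.continuous_iteratedDeriv hj).intervalIntegrable a b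

/-- With `f = ∫ f'`, one has `(f ⋆ G)^(j + 1) = f' ⋆ G^(j)` for `j ≤ n`; the first derivative is
computed on `G ⋆ f`, where the primitive sits in the second factor. -/
theorem convFn_left {n : ℕ} {f G : ℝ → ℝ} (hfi : Integrable f volume) (hfac : AbsCont f)
    (hf0 : Causal f) (hG : CausalRegular n G) : CausalRegular (n + 1) (convFn f G) := by
  obtain ⟨f', hf', hf'0, hff'⟩ := hfac.exists_causal_deriv hf0
  have hGc := fun j (hj : j ≤ n) => hG.continuous_iteratedDeriv hj
  have hG0 := hG.causal_iteratedDeriv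
  have hderiv0 : ∀ x, HasDerivAt (convFn f G) (convFn f' (iteratedDeriv 0 G) x) x := by
    rw [iteratedDeriv_zero, convFn_comm f G, convFn_comm f' G]
    have hcont : Continuous (convFn G f') := by
      rw [convFn_comm]; exact continuous_convFn hf' hf'0 hG.contDiff.continuous hG.causal
    exact hasDerivAt_convFn hG.integrable.locallyIntegrable hG.causal hfac.continuous hf0 hf' hf'0
      hff' hcont
  have hderiv : ∀ j < n, ∀ x, HasDerivAt (convFn f' (iteratedDeriv j G))
      (convFn f' (iteratedDeriv (j + 1) G) x) x := fun j hj =>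
    hasDerivAt_convFn hf' hf'0 (hGc j hj.le) (hG0 j hj.le)
      (hGc (j + 1) hj).locallyIntegrable (hG0 (j + 1) hj)
      (hG.sub_eq_integral_iteratedDeriv hj)
      (continuous_convFn hf' hf'0 (hGc (j + 1) hj) (hG0 (j + 1) hj))
  have hit := iteratedDeriv_succ_eq_of_hasDerivAt hderiv0 hderiv
  refine ⟨hfi.convFn hG.integrable, contDiff_succ_of_hasDerivAt hderiv0 hderiv
    (continuous_convFn hf' hf'0 (hGc n le_rfl) (hG0 n le_rfl)), ?_, ?_⟩
  · intro j hj
    rcases j with _ | j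
    · rw [iteratedDeriv_zero]
      exact hf0.convFn hG.causal
    · rw [hit j (by omega)]
      exact hf'0.convFn (hG0 j (by omega))
  · obtain ⟨H, hH, hH0, hGH⟩ := hG.absCont_iteratedDeriv.exists_causal_deriv (hG0 n le_rfl)
    rw [hit n le_rfl]
    exact ⟨convFn f' H, locallyIntegrable_convFn hf' hf'0 hH hH0,
      convFn_sub_eq_integral hf' hf'0 (hGc n le_rfl) (hG0 n le_rfl) hH hH0 hGH⟩

end CausalRegular

theorem CausalRegular.multiConv :
    ∀ {l : List (ℝ → ℝ)}, l ≠ [] →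
      (∀ f ∈ l, Integrable f volume ∧ AbsCont f ∧ Causal f) →
      CausalRegular (l.length - 1) (multiConv l)
  | [], hl, _ => absurd rfl hl
  | [f], _, hf => by
    obtain ⟨hfi, hfac, hf0⟩ := hf f (List.mem_singleton_self f)
    exact of_absCont hfi hfac hf0
  | f :: g :: rest, _, hl => by
    obtain ⟨hfi, hfac, hf0⟩ := hl f List.mem_cons_self
    exact convFn_left hfi hfac hf0
      (CausalRegular.multiConv (List.cons_ne_nil g rest) fun u hu =>
        hl u (List.mem_cons_of_mem f hu))

theorem stmt10 (k : ℕ) (hk : 1 ≤ k) (g : Fin k → ℝ → ℝ)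
    (hint : ∀ i, Integrable (g i) volume)
    (hAC : ∀ i, AbsCont (g i))
    (hz : ∀ i, ∀ x ≤ (0:ℝ), g i x = 0) :
    ContDiff ℝ (k - 1 : ℕ) (multiConv (List.ofFn g)) ∧
      AbsCont (iteratedDeriv (k - 1) (multiConv (List.ofFn g))) ∧
      ∀ j ≤ k - 1, iteratedDeriv j (multiConv (List.ofFn g)) 0 = 0 := by
  have hne : List.ofFn g ≠ [] := List.ne_nil_of_length_pos (by rw [List.length_ofFn]; omega)
  have hreg := CausalRegular.multiConv hne fun f hf => by
    obtain ⟨i, rfl⟩ := List.mem_ofFn.mp hf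
    exact ⟨hint i, hAC i, hz i⟩
  rw [List.length_ofFn] at hreg
  exact ⟨hreg.contDiff, hreg.absCont_iteratedDeriv,
    fun j hj => hreg.causal_iteratedDeriv j hj 0 le_rfl⟩
end

section
/- Let (Z_n)_{n≥1} be independent real random variables with mean 0, variance 1, and absolutely continuous densities, and let (α_n) be positive reals with ∑ α_n² < ∞. Let S = ∑_{n=1}^∞ α_n² Z_n² . Then for every d ≥ 0, lim_{h→0⁺} h^{−d}·P(S ≤ h²) = 0; i.e. P(S ≤ h²) decays faster than any power of h as h → 0. -/
/-!
Each term of the series is nonnegative, so `S ≤ h²` forces `|Z n| ≤ h / α n` for every `n`.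
For the first `k` indices these events are independent, and a density that is bounded near `0`
(absolutely continuous functions are continuous) gives each of them probability `O(h)`.
Hence `P(S ≤ h²) = O(hᵏ)` for every `k`, which beats any power `h^d`.
-/

open MeasureTheory ProbabilityTheory Filter Topology

theorem AbsCont.continuous_s11 {g : ℝ → ℝ} (hg : AbsCont g) : Continuous g := by
  obtain ⟨g', hg', hint⟩ := hg
  have hprimitive : g = fun b => g 0 + ∫ t in (0 : ℝ)..b, g' t := by
    funext b
    linarith [hint 0 b]
  rw [hprimitive]
  exact continuous_const.add <| intervalIntegral.continuous_primitive
    (fun a b => (hg'.integrableOn_isCompact isCompact_uIcc).intervalIntegrable) 0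

theorem tendsto_rpow_neg_mul_of_le_rpow {p : ℝ → ℝ} {C d e : ℝ} (hde : d < e)
    (hp : ∀ᶠ h in 𝓝[>] 0, 0 ≤ p h ∧ p h ≤ C * h ^ e) :
    Tendsto (fun h => h ^ (-d) * p h) (𝓝[>] 0) (𝓝 0) := by
  have hpow : Tendsto (fun h : ℝ => h ^ (e - d)) (𝓝 0) (𝓝 0) := by
    simpa [Real.zero_rpow (sub_pos.2 hde).ne'] using
      (Real.continuousAt_rpow_const 0 (e - d) (Or.inr (sub_pos.2 hde).le)).tendsto
  refine squeeze_zero' ?_ ?_ (by simpa using (hpow.mono_left nhdsWithin_le_nhds).const_mul C)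
  · filter_upwards [self_mem_nhdsWithin, hp] with h hh hph
    exact mul_nonneg (Real.rpow_nonneg (le_of_lt hh) _) hph.1
  · filter_upwards [self_mem_nhdsWithin, hp] with h (hh : 0 < h) hph
    calc h ^ (-d) * p h ≤ h ^ (-d) * (C * h ^ e) := by gcongr; exact hph.2
      _ = C * h ^ (e - d) := by
        rw [mul_left_comm, ← Real.rpow_add hh, neg_add_eq_sub]

section Probability

variable {Ω : Type*} [MeasurableSpace Ω] {P : Measure Ω}

theorem ae_summable_of_summable_integral {f : ℕ → Ω → ℝ} (hf_nonneg : ∀ n ω, 0 ≤ f n ω)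
    (hf : ∀ n, Integrable (f n) P) (hsum : Summable fun n => ∫ ω, f n ω ∂P) :
    ∀ᵐ ω ∂P, Summable fun n => f n ω := by
  have hnorm : ∀ n ω, ‖f n ω‖ = f n ω := fun n ω => Real.norm_of_nonneg (hf_nonneg n ω)
  have hL1 : ∑' n, eLpNorm (f n) 1 P ≠ ⊤ := by
    simp_rw [eLpNorm_one_eq_lintegral_enorm, ← ofReal_integral_norm_eq_lintegral_enorm (hf _),
      hnorm]
    rw [← ENNReal.ofReal_tsum_of_nonneg (fun n => integral_nonneg (hf_nonneg n)) hsum]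
    exact ENNReal.ofReal_ne_top
  filter_upwards [summable_norm_of_tsum_eLpNorm_ne_top le_rfl
    (fun n => (hf n).aestronglyMeasurable) hL1] with ω hω
  simpa only [hnorm] using hω

theorem measure_preimage_Icc_le_of_density_le {X : Ω → ℝ} (hX : Measurable X) {g : ℝ → ℝ}
    (hg : P.map X = volume.withDensity fun x => ENNReal.ofReal (g x)) {B ε : ℝ} (hε : 0 ≤ ε)
    (hB : ∀ x ∈ Set.Icc (-ε) ε, g x ≤ B) :
    P (X ⁻¹' Set.Icc (-ε) ε) ≤ ENNReal.ofReal (2 * B * ε) := by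
  rw [← Measure.map_apply hX measurableSet_Icc, hg, withDensity_apply _ measurableSet_Icc]
  calc ∫⁻ x in Set.Icc (-ε) ε, ENNReal.ofReal (g x)
      ≤ ∫⁻ _ in Set.Icc (-ε) ε, ENNReal.ofReal B :=
        setLIntegral_mono measurable_const fun x hx => ENNReal.ofReal_le_ofReal (hB x hx)
    _ = ENNReal.ofReal (2 * B * ε) := by
        rw [setLIntegral_const, Real.volume_Icc, ← ENNReal.ofReal_mul' (by linarith)]
        ring_nf

theorem exists_measure_preimage_Icc_le_of_continuous_density {X : Ω → ℝ} (hX : Measurable X)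
    {g : ℝ → ℝ} (hg : P.map X = volume.withDensity fun x => ENNReal.ofReal (g x))
    (hcont : Continuous g) :
    ∃ C, 0 ≤ C ∧ ∀ ε ∈ Set.Icc (0 : ℝ) 1, P (X ⁻¹' Set.Icc (-ε) ε) ≤ ENNReal.ofReal (C * ε) := by
  obtain ⟨B, hB⟩ := (isCompact_Icc (a := (-1 : ℝ)) (b := 1)).bddAbove_image hcont.continuousOn
  refine ⟨2 * max B 0, by positivity, fun ε hε => ?_⟩
  refine measure_preimage_Icc_le_of_density_le hX hg hε.1 fun x hx => ?_
  exact (hB ⟨x, ⟨by linarith [hx.1, hε.2], by linarith [hx.2, hε.2]⟩, rfl⟩).trans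
    (le_max_left _ _)

theorem measure_tsum_sq_mul_sq_le_le_prod {Z : ℕ → Ω → ℝ} (hindep : iIndepFun Z P)
    {α : ℕ → ℝ} (hα : ∀ n, 0 < α n)
    (hsumm : ∀ᵐ ω ∂P, Summable fun n => α n ^ 2 * Z n ω ^ 2) (s : Finset ℕ) {h : ℝ}
    (hh : 0 ≤ h) :
    P {ω | ∑' n, α n ^ 2 * Z n ω ^ 2 ≤ h ^ 2} ≤
      ∏ n ∈ s, P (Z n ⁻¹' Set.Icc (-(h / α n)) (h / α n)) := by
  rw [← hindep.meas_biInter fun n _ => ⟨_, measurableSet_Icc, rfl⟩]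
  refine measure_mono_ae ?_
  filter_upwards [hsumm] with ω hω (hS : _ ≤ h ^ 2)
  refine Set.mem_iInter₂.2 fun n _ => ?_
  have hterm : (α n * Z n ω) ^ 2 ≤ h ^ 2 := by
    rw [mul_pow]
    exact (hω.le_tsum n fun m _ => by positivity).trans hS
  have habs : α n * |Z n ω| ≤ h := by
    simpa [abs_mul, abs_of_pos (hα n)] using abs_le_of_sq_le_sq hterm hh
  exact abs_le.1 ((le_div_iff₀' (hα n)).2 habs)

theorem measure_tsum_sq_mul_sq_le_le_pow {Z : ℕ → Ω → ℝ} (hindep : iIndepFun Z P)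
    {α : ℕ → ℝ} (hα : ∀ n, 0 < α n)
    (hsumm : ∀ᵐ ω ∂P, Summable fun n => α n ^ 2 * Z n ω ^ 2) {C : ℕ → ℝ}
    (hC0 : ∀ n, 0 ≤ C n)
    (hC : ∀ n, ∀ ε ∈ Set.Icc (0 : ℝ) 1, P (Z n ⁻¹' Set.Icc (-ε) ε) ≤ ENNReal.ofReal (C n * ε))
    (k : ℕ) {h : ℝ} (hh : 0 ≤ h) (hhα : ∀ n ∈ Finset.range k, h ≤ α n) :
    P {ω | ∑' n, α n ^ 2 * Z n ω ^ 2 ≤ h ^ 2} ≤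
      ENNReal.ofReal ((∏ n ∈ Finset.range k, C n / α n) * h ^ k) := by
  calc P {ω | ∑' n, α n ^ 2 * Z n ω ^ 2 ≤ h ^ 2}
      ≤ ∏ n ∈ Finset.range k, P (Z n ⁻¹' Set.Icc (-(h / α n)) (h / α n)) :=
        measure_tsum_sq_mul_sq_le_le_prod hindep hα hsumm _ hh
    _ ≤ ∏ n ∈ Finset.range k, ENNReal.ofReal (C n / α n * h) := by
        refine Finset.prod_le_prod' fun n hn => ?_
        refine (hC n (h / α n) ⟨div_nonneg hh (hα n).le, (div_le_one (hα n)).2 (hhα n hn)⟩)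
          |>.trans_eq (congrArg ENNReal.ofReal (by ring))
    _ = ENNReal.ofReal ((∏ n ∈ Finset.range k, C n / α n) * h ^ k) := by
        rw [← ENNReal.ofReal_prod_of_nonneg fun n _ =>
          mul_nonneg (div_nonneg (hC0 n) (hα n).le) hh, Finset.prod_mul_distrib,
          Finset.prod_const, Finset.card_range]

end Probability

theorem stmt11_general {Ω : Type*} [MeasurableSpace Ω] (P : Measure Ω) [IsProbabilityMeasure P]
    (Z : ℕ → Ω → ℝ) (hmeas : ∀ n, Measurable (Z n))
    (hindep : iIndepFun Z P)
    (hvar : ∀ n, ∫ ω, (Z n ω) ^ 2 ∂P = 1)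
    (f : ℕ → ℝ → ℝ)
    (hdens : ∀ n, Measure.map (Z n) P = volume.withDensity (fun x => ENNReal.ofReal (f n x)))
    (hfAC : ∀ n, AbsCont (f n))
    (α : ℕ → ℝ) (hα : ∀ n, 0 < α n) (hsum : Summable (fun n => (α n) ^ 2))
    (S : Ω → ℝ) (hS : ∀ ω, S ω = ∑' n, (α n) ^ 2 * (Z n ω) ^ 2) :
    ∀ d : ℝ, 0 ≤ d →
      Tendsto (fun h : ℝ => h ^ (-d) * (P {ω | S ω ≤ h ^ 2}).toReal)
        (nhdsWithin 0 (Set.Ioi 0)) (nhds 0) := by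
  intro d _
  obtain rfl : S = fun ω => ∑' n, α n ^ 2 * Z n ω ^ 2 := funext hS
  have hint : ∀ n, Integrable (fun ω => α n ^ 2 * Z n ω ^ 2) P := fun n =>
    (Integrable.of_integral_ne_zero (by simp [hvar n])).const_mul _
  have hsumm : ∀ᵐ ω ∂P, Summable fun n => α n ^ 2 * Z n ω ^ 2 :=
    ae_summable_of_summable_integral (fun n ω => by positivity) hint
      (by simpa [integral_const_mul, hvar] using hsum)
  choose C hC0 hC using fun n =>
    exists_measure_preimage_Icc_le_of_continuous_density (hmeas n) (hdens n) (hfAC n).continuous_s11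
  obtain ⟨k, hdk⟩ := exists_nat_gt d
  refine tendsto_rpow_neg_mul_of_le_rpow (C := ∏ n ∈ Finset.range k, C n / α n) hdk ?_
  have hsmall : ∀ᶠ h in 𝓝[>] (0 : ℝ), ∀ n ∈ Finset.range k, h ≤ α n :=
    (Finset.range k).eventually_all.2 fun n _ =>
      mem_nhdsWithin_of_mem_nhds (Iic_mem_nhds (hα n))
  filter_upwards [self_mem_nhdsWithin, hsmall] with h (hh : 0 < h) hhα
  refine ⟨ENNReal.toReal_nonneg, ?_⟩
  rw [Real.rpow_natCast]
  exact ENNReal.toReal_le_of_le_ofReal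
    (mul_nonneg (Finset.prod_nonneg fun n _ => div_nonneg (hC0 n) (hα n).le) (by positivity))
    (measure_tsum_sq_mul_sq_le_le_pow hindep hα hsumm hC0 hC k hh.le hhα)

theorem stmt11 {Ω : Type*} [MeasurableSpace Ω] (P : Measure Ω) [IsProbabilityMeasure P]
    (Z : ℕ → Ω → ℝ) (hmeas : ∀ n, Measurable (Z n))
    (hindep : iIndepFun Z P)
    (hmean : ∀ n, ∫ ω, Z n ω ∂P = 0)
    (hvar : ∀ n, ∫ ω, (Z n ω) ^ 2 ∂P = 1)
    (f : ℕ → ℝ → ℝ)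
    (hdens : ∀ n, Measure.map (Z n) P = volume.withDensity (fun x => ENNReal.ofReal (f n x)))
    (hfAC : ∀ n, AbsCont (f n))
    (α : ℕ → ℝ) (hα : ∀ n, 0 < α n) (hsum : Summable (fun n => (α n) ^ 2))
    (S : Ω → ℝ) (hS : ∀ ω, S ω = ∑' n, (α n) ^ 2 * (Z n ω) ^ 2) :
    ∀ d : ℝ, 0 ≤ d →
      Tendsto (fun h : ℝ => h ^ (-d) * (P {ω | S ω ≤ h ^ 2}).toReal)
        (nhdsWithin 0 (Set.Ioi 0)) (nhds 0) :=
  stmt11_general P Z hmeas hindep hvar f hdens hfAC α hα hsum S hS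
end

section
/- Let φ : (0,1] → (0,∞) be nondecreasing and suppose there exist c > 0 and, for every d > 0, a sequence h_n → 0 with φ(h_n) ≤ h_n^d. Then for every θ ∈ (0,1), the inequality ∫₀¹ φ(h t) dt ≥ θ·φ(h) fails for some h ∈ (0,1]; i.e. inf_{h∈(0,1]} (∫₀¹φ(ht)dt)/φ(h) = 0. -/
open MeasureTheory Set

/-! If `∫₀¹ φ(ht) dt ≥ θ φ(h)` for all `h ∈ (0,1]`, then `F(h) = ∫₀ʰ φ` satisfies
`θ h φ(h) ≤ F(h) ≤ h φ(h)`. Combined with `F(h) - F(lh) ≤ (1 - l) h φ(h)` for `l = 1 - θ/2`, this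
gives `F(lh) ≥ F(h)/2`, so `F` decays at most geometrically along `lⁿ`, i.e. at most like a power
`h^N`. Then `φ(h) ≥ F(h)/h ≥ F(1) h^N / 2`, which is incompatible with `φ(hₙ) ≤ hₙ^(N+1)` along a
sequence `hₙ → 0`. -/

theorem exists_mul_pow_le_of_mul_le_comp_mul {G : ℝ → ℝ} {l c : ℝ}
    (hG : MonotoneOn G (Ioc 0 1)) (hl₀ : 0 < l) (hl₁ : l < 1) (hc : 0 < c) (hG₁ : 0 ≤ G 1)
    (hstep : ∀ h ∈ Ioc (0 : ℝ) 1, c * G h ≤ G (l * h)) :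
    ∃ N : ℕ, ∀ h ∈ Ioc (0 : ℝ) 1, c * G 1 * h ^ N ≤ G h := by
  have hmem (n : ℕ) : l ^ n ∈ Ioc (0 : ℝ) 1 := ⟨pow_pos hl₀ n, pow_le_one₀ hl₀.le hl₁.le⟩
  have hgeom (n : ℕ) : c ^ n * G 1 ≤ G (l ^ n) := by
    induction n with
    | zero => simp
    | succ n ih =>
      calc c ^ (n + 1) * G 1 = c * (c ^ n * G 1) := by ring
        _ ≤ c * G (l ^ n) := by gcongr
        _ ≤ G (l ^ (n + 1)) := by rw [pow_succ']; exact hstep _ (hmem n)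
  obtain ⟨N, hN⟩ := exists_pow_lt_of_lt_one hc hl₁
  refine ⟨N, fun h hh => ?_⟩
  obtain ⟨n, hlow, hup⟩ := exists_nat_pow_near_of_lt_one hh.1 hh.2 hl₀ hl₁
  calc c * G 1 * h ^ N ≤ c * G 1 * (l ^ N) ^ n := by
        rw [← pow_mul, mul_comm N, pow_mul]
        gcongr
        exact hh.1.le
    _ ≤ c * G 1 * c ^ n := by gcongr
    _ = c ^ (n + 1) * G 1 := by ring
    _ ≤ G (l ^ (n + 1)) := hgeom _
    _ ≤ G h := hG (hmem _) hh hlow.le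

theorem intervalIntegral_le_sub_mul_of_monotoneOn {φ : ℝ → ℝ} {a b : ℝ} (hab : a ≤ b)
    (hmono : MonotoneOn φ (Ioc a b)) (hint : IntervalIntegrable φ volume a b) :
    ∫ t in a..b, φ t ≤ (b - a) * φ b :=
  calc ∫ t in a..b, φ t ≤ ∫ _ in a..b, φ b :=
        intervalIntegral.integral_mono_on_of_le_Ioo hab hint intervalIntegrable_const
          fun _ hx => hmono (Ioo_subset_Ioc_self hx) ⟨hx.1.trans hx.2, le_rfl⟩ hx.2.le
    _ = (b - a) * φ b := by simp

theorem IntervalIntegrable.mono_Icc {f : ℝ → ℝ} {μ : Measure ℝ} {a b c d : ℝ}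
    (hf : IntervalIntegrable f μ a b) (hab : a ≤ b) (hc : c ∈ Icc a b) (hd : d ∈ Icc a b) :
    IntervalIntegrable f μ c d :=
  hf.mono_set (uIcc_subset_uIcc (by rwa [uIcc_of_le hab]) (by rwa [uIcc_of_le hab]))

theorem half_integral_le_integral_mul {φ : ℝ → ℝ} {θ : ℝ} (hθ₀ : 0 < θ) (hθ₂ : θ < 2)
    (hmono : MonotoneOn φ (Ioc 0 1)) (hint : IntervalIntegrable φ volume 0 1)
    (H : ∀ h ∈ Ioc (0 : ℝ) 1, θ * φ h ≤ ∫ t in (0 : ℝ)..1, φ (h * t))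
    {h : ℝ} (hh : h ∈ Ioc (0 : ℝ) 1) :
    1 / 2 * ∫ t in (0 : ℝ)..h, φ t ≤ ∫ t in (0 : ℝ)..(1 - θ / 2) * h, φ t := by
  set l := 1 - θ / 2 with hl
  have hlh₀ : 0 ≤ l * h := mul_nonneg (by linarith) hh.1.le
  have hlh : l * h ≤ h := mul_le_of_le_one_left hh.1.le (by linarith)
  have hlower : θ * h * φ h ≤ ∫ t in (0 : ℝ)..h, φ t := by
    have := H h hh
    rw [intervalIntegral.integral_comp_mul_left _ hh.1.ne', mul_zero, mul_one, smul_eq_mul,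
      le_inv_mul_iff₀ hh.1] at this
    linarith
  have hsplit := intervalIntegral.integral_add_adjacent_intervals
    (hint.mono_Icc zero_le_one ⟨le_rfl, zero_le_one⟩ ⟨hlh₀, hlh.trans hh.2⟩)
    (hint.mono_Icc zero_le_one ⟨hlh₀, hlh.trans hh.2⟩ ⟨hh.1.le, hh.2⟩)
  have htail := intervalIntegral_le_sub_mul_of_monotoneOn hlh
    (hmono.mono (Ioc_subset_Ioc hlh₀ hh.2))
    (hint.mono_Icc zero_le_one ⟨hlh₀, hlh.trans hh.2⟩ ⟨hh.1.le, hh.2⟩)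
  have hlen : (h - l * h) * φ h = θ * h * φ h / 2 := by ring
  linarith

theorem exists_mul_pow_le_of_mul_le_integral_comp_mul {φ : ℝ → ℝ} {θ : ℝ} (hθ₀ : 0 < θ)
    (hθ₂ : θ < 2) (hmono : MonotoneOn φ (Ioc 0 1)) (hpos : ∀ h ∈ Ioc (0 : ℝ) 1, 0 < φ h)
    (hint : IntervalIntegrable φ volume 0 1)
    (H : ∀ h ∈ Ioc (0 : ℝ) 1, θ * φ h ≤ ∫ t in (0 : ℝ)..1, φ (h * t)) :
    ∃ C > 0, ∃ N : ℕ, ∀ h ∈ Ioc (0 : ℝ) 1, C * h ^ N ≤ φ h := by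
  set F : ℝ → ℝ := fun h => ∫ t in (0 : ℝ)..h, φ t
  have hF_mono : MonotoneOn F (Ioc 0 1) := fun a ha b hb hab =>
    intervalIntegral.integral_mono_interval le_rfl ha.1.le hab
      ((ae_restrict_iff' measurableSet_Ioc).2 <| ae_of_all _ fun x hx =>
        (hpos x ⟨hx.1, hx.2.trans hb.2⟩).le)
      (hint.mono_Icc zero_le_one ⟨le_rfl, zero_le_one⟩ ⟨hb.1.le, hb.2⟩)
  have hF₁ : 0 < F 1 := by
    have := H 1 ⟨one_pos, le_rfl⟩
    simp only [one_mul] at this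
    exact (mul_pos hθ₀ (hpos 1 ⟨one_pos, le_rfl⟩)).trans_le this
  obtain ⟨N, hN⟩ := exists_mul_pow_le_of_mul_le_comp_mul hF_mono (by linarith) (by linarith)
    one_half_pos hF₁.le fun h hh => half_integral_le_integral_mul hθ₀ hθ₂ hmono hint H hh
  refine ⟨1 / 2 * F 1, by positivity, N, fun h hh => ?_⟩
  calc 1 / 2 * F 1 * h ^ N ≤ F h := hN h hh
    _ ≤ h * φ h := by
      simpa using intervalIntegral_le_sub_mul_of_monotoneOn hh.1.le
        (hmono.mono (Ioc_subset_Ioc le_rfl hh.2))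
        (hint.mono_Icc zero_le_one ⟨le_rfl, zero_le_one⟩ ⟨hh.1.le, hh.2⟩)
    _ ≤ φ h := mul_le_of_le_one_left (hpos h hh).le hh.2

theorem stmt17 (φ : ℝ → ℝ) (hmono : MonotoneOn φ (Set.Ioc 0 1))
    (hpos : ∀ h ∈ Set.Ioc (0:ℝ) 1, 0 < φ h)
    (hint : IntervalIntegrable φ volume 0 1)
    (hdecay : ∀ d : ℝ, 0 < d → ∃ u : ℕ → ℝ,
      (∀ n, u n ∈ Set.Ioc (0:ℝ) 1) ∧ Filter.Tendsto u Filter.atTop (nhds 0) ∧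
      ∀ n, φ (u n) ≤ (u n) ^ d) :
    ∀ θ : ℝ, 0 < θ → θ < 1 →
      ∃ h ∈ Set.Ioc (0:ℝ) 1, (∫ t in (0:ℝ)..1, φ (h * t)) < θ * φ h := by
  intro θ hθ₀ hθ₁
  by_contra! H
  obtain ⟨C, hC, N, hCN⟩ :=
    exists_mul_pow_le_of_mul_le_integral_comp_mul hθ₀ (by linarith) hmono hpos hint H
  obtain ⟨u, hu, hu₀, hφu⟩ := hdecay (N + 1) (by positivity)
  obtain ⟨n, hn⟩ := (hu₀.eventually_lt_const hC).exists
  have hupper : φ (u n) ≤ u n * u n ^ N := by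
    simpa only [← Nat.cast_add_one, Real.rpow_natCast, pow_succ'] using hφu n
  exact hn.not_ge <|
    le_of_mul_le_mul_right ((hCN (u n) (hu n)).trans hupper) (pow_pos (hu n).1 N)
end
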